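/- arXiv:1802.00943 — 3 statements merged into one kernel-verified Lean document; each statement's English description precedes it below -/
import Mathlib

section
/- The Lie algebra h is nilpotent of class exactly 2: its derived subalgebra ⁅h, h⁆ equals the one-dimensional span ℂ·X3, this span is contained in the center of h (i.e. ⁅X, Y⁆ = 0 for every X ∈ h and Y ∈ ℂ·X3), and ⁅h, h⁆ ≠ 0. -/
open Matrix

noncomputable section

def X1 (α β : ℂ) : Matrix (Fin 4) (Fin 4) ℂ :=
  !![1,1,0,1; 1,1,0,0; α,β,0,0; 0,0,0,0]

def X2 (α β : ℂ) : Matrix (Fin 4) (Fin 4) ℂ :=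
  !![1,1,0,0; 1,1,0,1; β-1,α+1,0,0; 0,0,0,0]

def X3 : Matrix (Fin 4) (Fin 4) ℂ :=
  !![0,0,0,0; 0,0,0,0; 0,0,0,1; 0,0,0,0]

/-- The ℂ-linear span of {X1, X2, X3}. -/
def h (α β : ℂ) : Submodule ℂ (Matrix (Fin 4) (Fin 4) ℂ) :=
  Submodule.span ℂ {X1 α β, X2 α β, X3}

theorem LieAlgebra.lie_mem_of_mem_span {R L : Type*} [CommRing R] [LieRing L] [LieAlgebra R L]
    {s t : Set L} {N : Submodule R L} (hst : ∀ a ∈ s, ∀ b ∈ t, ⁅a, b⁆ ∈ N) {x y : L}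
    (hx : x ∈ Submodule.span R s) (hy : y ∈ Submodule.span R t) : ⁅x, y⁆ ∈ N := by
  have hmem := Submodule.apply_mem_map₂ (LieModule.toEnd R L L : L →ₗ[R] Module.End R L) hx hy
  rw [Submodule.map₂_span_span] at hmem
  exact Submodule.span_le.mpr (Set.image2_subset_iff.mpr hst) hmem

section

attribute [local instance] LieRing.ofAssociativeRing

theorem lie_X1_X2 (α β : ℂ) : ⁅X1 α β, X2 α β⁆ = X3 := by
  ext i j
  fin_cases i <;> fin_cases j <;> simp [X1, X2, X3, Ring.lie_def] <;> ring

theorem lie_X1_X3 (α β : ℂ) : ⁅X1 α β, X3⁆ = 0 := by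
  ext i j
  fin_cases i <;> fin_cases j <;> simp [X1, X3, Ring.lie_def]

theorem lie_X2_X3 (α β : ℂ) : ⁅X2 α β, X3⁆ = 0 := by
  ext i j
  fin_cases i <;> fin_cases j <;> simp [X2, X3, Ring.lie_def]

theorem X3_ne_zero : X3 ≠ 0 := fun hX3 => by
  simpa [X3] using congrFun (congrFun hX3 2) 3

theorem lie_generators_mem_span_X3 (α β : ℂ) :
    ∀ a ∈ ({X1 α β, X2 α β, X3} : Set (Matrix (Fin 4) (Fin 4) ℂ)),
      ∀ b ∈ ({X1 α β, X2 α β, X3} : Set (Matrix (Fin 4) (Fin 4) ℂ)),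
        ⁅a, b⁆ ∈ Submodule.span ℂ {X3} := by
  have hX3 : X3 ∈ Submodule.span ℂ {X3} := Submodule.mem_span_singleton_self X3
  have lie_X2_X1 : ⁅X2 α β, X1 α β⁆ = -X3 := by rw [← lie_skew, lie_X1_X2]
  have lie_X3_X1 : ⁅X3, X1 α β⁆ = 0 := by rw [← lie_skew, lie_X1_X3, neg_zero]
  have lie_X3_X2 : ⁅X3, X2 α β⁆ = 0 := by rw [← lie_skew, lie_X2_X3, neg_zero]
  rintro a (rfl | rfl | rfl) b (rfl | rfl | rfl) <;>
    simp [lie_X1_X2, lie_X1_X3, lie_X2_X3, lie_X2_X1, lie_X3_X1, lie_X3_X2, hX3]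

theorem lie_generators_X3_mem_bot (α β : ℂ) :
    ∀ a ∈ ({X1 α β, X2 α β, X3} : Set (Matrix (Fin 4) (Fin 4) ℂ)),
      ∀ b ∈ ({X3} : Set (Matrix (Fin 4) (Fin 4) ℂ)), ⁅a, b⁆ ∈ (⊥ : Submodule ℂ _) := by
  rintro a (rfl | rfl | rfl) b rfl <;> simp [lie_X1_X3, lie_X2_X3]

end

/-- h is nilpotent of class exactly 2: ⁅h,h⁆ = ℂ·X3, this span is central in h,
and ⁅h,h⁆ ≠ 0. -/
theorem h_nilpotent_class_two (α β : ℂ) :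
    Submodule.span ℂ {Z : Matrix (Fin 4) (Fin 4) ℂ | ∃ A ∈ h α β, ∃ B ∈ h α β, Z = ⁅A, B⁆}
      = Submodule.span ℂ {X3} ∧
    (∀ X ∈ h α β, ∀ Y ∈ Submodule.span ℂ ({X3} : Set (Matrix (Fin 4) (Fin 4) ℂ)), ⁅X, Y⁆ = 0) ∧
    Submodule.span ℂ ({X3} : Set (Matrix (Fin 4) (Fin 4) ℂ)) ≠ ⊥ := by
  let _ : LieRing (Matrix (Fin 4) (Fin 4) ℂ) := LieRing.ofAssociativeRing
  have hX1 : X1 α β ∈ h α β := Submodule.subset_span (by simp)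
  have hX2 : X2 α β ∈ h α β := Submodule.subset_span (by simp)
  refine ⟨le_antisymm ?_ ?_, ?_, ?_⟩
  · rw [Submodule.span_le]
    rintro _ ⟨A, hA, B, hB, rfl⟩
    exact LieAlgebra.lie_mem_of_mem_span (lie_generators_mem_span_X3 α β) hA hB
  · rw [Submodule.span_singleton_le_iff_mem]
    exact Submodule.subset_span ⟨X1 α β, hX1, X2 α β, hX2, (lie_X1_X2 α β).symm⟩
  · intro X hX Y hY
    exact (Submodule.mem_bot ℂ).mp
      (LieAlgebra.lie_mem_of_mem_span (lie_generators_X3_mem_bot α β) hX hY)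
  · exact (Submodule.span_singleton_eq_bot.not).mpr X3_ne_zero
end
end

section
/- No nonzero element of h is diagonalizable: if X ∈ span_ℂ{X1, X2, X3}, X ≠ 0, then the linear endomorphism of ℂ⁴ defined by X is not diagonalizable. In particular h contains no nonzero semisimple element, so h admits no decomposition as (nilpotent ideal) ⊕ (nonzero central subalgebra of semisimple elements). -/
open Matrix

noncomputable section

/-- A matrix is diagonalizable if it is conjugate to a diagonal matrix. -/
def IsDiagonalizable {n : ℕ} (A : Matrix (Fin n) (Fin n) ℂ) : Prop :=
  ∃ P : Matrix (Fin n) (Fin n) ℂ, IsUnit P ∧ (P⁻¹ * A * P).IsDiag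

/-!
Every element `a • X1 + b • X2 + c • X3` of `h` has the form
`!![s, s, 0, a; s, s, 0, b; p, r, 0, c; 0, 0, 0, 0]` with `s = a + b`, whose characteristic
polynomial is `X ^ 3 * (X - 2 s)`. A diagonalizable matrix is annihilated by every polynomial
vanishing on its eigenvalues, so a diagonalizable element `M` satisfies `M (M - 2 s) = 0`.
Two entries of this identity force `s ^ 2 = 0`; then all eigenvalues of `M` are `0`, and `M = 0`.
-/

open Polynomial

theorem Units.aeval_conj {R A : Type*} [CommSemiring R] [Ring A] [Algebra R A] (u : Aˣ) (x : A)
    (q : R[X]) : aeval (↑u * x * ↑u⁻¹) q = ↑u * aeval x q * ↑u⁻¹ := by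
  induction q using Polynomial.induction_on' with
  | add p q hp hq => simp only [map_add, hp, hq, mul_add, add_mul]
  | monomial k a =>
    simp only [aeval_monomial, Units.conj_pow, ← Algebra.smul_def, mul_smul_comm, smul_mul_assoc]

theorem Matrix.aeval_diagonal {n R : Type*} [Fintype n] [DecidableEq n] [CommSemiring R]
    (d : n → R) (q : R[X]) : aeval (diagonal d) q = diagonal fun i => q.eval (d i) := by
  simpa [aeval_pi_apply] using aeval_algHom_apply (diagonalAlgHom R) d q

theorem IsDiagonalizable.aeval_eq_zero {n : ℕ} {A : Matrix (Fin n) (Fin n) ℂ}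
    (hA : IsDiagonalizable A) {q : ℂ[X]} (hq : ∀ μ, A.charpoly.IsRoot μ → q.IsRoot μ) :
    aeval A q = 0 := by
  obtain ⟨_, ⟨u, rfl⟩, hD⟩ := hA
  rw [← coe_units_inv] at hD
  set d := (u⁻¹.val * A * u.val).diag
  have hA : A = u.val * diagonal d * u⁻¹.val := by
    rw [hD.diagonal_diag]
    simp [mul_assoc]
  have hroot (i : Fin n) : q.eval (d i) = 0 := hq _ <| by
    rw [hA, coe_units_inv, charpoly_units_conj, charpoly_diagonal]
    simp only [IsRoot, eval_prod, eval_sub, eval_X, eval_C, Finset.prod_eq_zero_iff]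
    exact ⟨i, Finset.mem_univ _, sub_self _⟩
  rw [hA, Units.aeval_conj, aeval_diagonal]
  simp [hroot]

def hShape (s a b p r c : ℂ) : Matrix (Fin 4) (Fin 4) ℂ :=
  !![s, s, 0, a; s, s, 0, b; p, r, 0, c; 0, 0, 0, 0]

theorem smul_X1_add_smul_X2_add_smul_X3 (α β a b c : ℂ) :
    a • X1 α β + b • X2 α β + c • X3 =
      hShape (a + b) a b (a * α + b * (β - 1)) (a * β + b * (α + 1)) c := by
  ext i j
  fin_cases i <;> fin_cases j <;> simp [X1, X2, X3, hShape]

theorem charpoly_hShape (s a b p r c : ℂ) :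
    (hShape s a b p r c).charpoly = X ^ 3 * (X - C (2 * s)) := by
  rw [charpoly, det_succ_row _ 3, Fin.sum_univ_four]
  simp [hShape, det_fin_three, Fin.succAbove, Fin.lt_def, C_mul, map_ofNat]
  ring

theorem mul_sub_eq_zero_of_aeval_hShape_eq_zero {s a b p r c : ℂ}
    (h : aeval (hShape s a b p r c) (X * (X - C (2 * s))) = 0) :
    s * (b - a) = 0 ∧ s * (r - p) = 0 := by
  rw [aeval_mul, aeval_sub, aeval_X, aeval_C, Algebra.algebraMap_eq_smul_one] at h
  have h03 := congrFun (congrFun h 0) 3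
  have h20 := congrFun (congrFun h 2) 0
  simp [hShape, mul_apply, Fin.sum_univ_four] at h03 h20
  exact ⟨by linear_combination h03, by linear_combination h20⟩

theorem no_nonzero_semisimple_in_h_general (α β : ℂ) :
    ∀ X ∈ h α β, X ≠ 0 → ¬ IsDiagonalizable X := by
  intro M hM hM0 hdiag
  obtain ⟨a, b, c, rfl⟩ := Submodule.mem_span_triple.mp hM
  rw [smul_X1_add_smul_X2_add_smul_X3] at hM0 hdiag
  have hs : a + b = 0 := by
    have h := hdiag.aeval_eq_zero (q := X * (X - C (2 * (a + b)))) fun μ hμ => by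
      rw [charpoly_hShape] at hμ
      simpa [pow_eq_zero_iff] using hμ
    obtain ⟨h1, h2⟩ := mul_sub_eq_zero_of_aeval_hShape_eq_zero h
    exact pow_eq_zero_iff two_ne_zero |>.mp <| by linear_combination h2 + (β - α - 1) * h1
  have h := hdiag.aeval_eq_zero (q := X) fun μ hμ => by
    rw [charpoly_hShape, hs] at hμ
    simpa using hμ
  exact hM0 (by simpa using h)

/-- No nonzero element of h is diagonalizable. -/
theorem no_nonzero_semisimple_in_h (α β : ℂ) (hαβ : α + β ≠ 0) :
    ∀ X ∈ h α β, X ≠ 0 → ¬ IsDiagonalizable X :=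
  no_nonzero_semisimple_in_h_general α β
end
end

section
/- The Lie algebra m is closed under Chevalley–Jordan decomposition: for every X ∈ span_ℂ{X1, X2, X3, X4} there exist matrices S, N ∈ span_ℂ{X1, X2, X3, X4} such that X = S + N, S·N = N·S, N is nilpotent, and the endomorphism of ℂ⁴ defined by S is diagonalizable. -/
open Matrix

noncomputable section

def X4 (α β : ℂ) : Matrix (Fin 4) (Fin 4) ℂ :=
  !![1,1,0,1/2; 1,1,0,1/2; (α+β)/2,(α+β)/2,0,(α+β)/4; 0,0,0,0]

/-- The ℂ-linear span of {X1, X2, X3, X4}. -/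
def m (α β : ℂ) : Submodule ℂ (Matrix (Fin 4) (Fin 4) ℂ) :=
  Submodule.span ℂ {X1 α β, X2 α β, X3, X4 α β}
/-!
Write `X ∈ m` as `S + N` with `S = (tr X / 2) • X4`; since `tr X1 = tr X2 = tr X4 = 2` and
`tr X3 = 0`, `N` lies in the span of `X1 - X4`, `X2 - X4`, `X3`. The rank-one matrix `X4` has
trace `2`, so it is diagonalizable. The three spanning matrices are killed by `X4` on both sides,
so `S` and `N` commute (`SN = NS = 0`), and they all lower the flag
`⟨e₂⟩ ⊂ ⟨e₀, e₁, e₂⟩ ⊂ ℂ⁴`, so `N³ = 0`.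
-/

namespace Matrix

variable {ι R : Type*} [Semiring R]

def strictBlockTriangularSubmodule (b : ι → ℕ) : Submodule R (Matrix ι ι R) where
  carrier := {N | ∀ i j, b j ≤ b i → N i j = 0}
  zero_mem' _ _ _ := rfl
  add_mem' hM hN i j hij := by simp [hM i j hij, hN i j hij]
  smul_mem' c N hN i j hij := by simp [hN i j hij]

variable [Fintype ι] [DecidableEq ι]

theorem pow_apply_eq_zero_of_mem_strictBlockTriangularSubmodule {b : ι → ℕ} {N : Matrix ι ι R}
    (hN : N ∈ strictBlockTriangularSubmodule b) (k : ℕ) :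
    ∀ i j, b j < b i + k → (N ^ k) i j = 0 := by
  induction k with
  | zero =>
    intro i j hij
    simp [one_apply_ne (by rintro rfl; omega : i ≠ j)]
  | succ k ih =>
    intro i j hij
    rw [pow_succ', mul_apply]
    refine Finset.sum_eq_zero fun l _ => ?_
    by_cases hil : b l ≤ b i
    · simp [hN i l hil]
    · simp [ih l j (by omega)]

theorem isNilpotent_of_mem_strictBlockTriangularSubmodule {b : ι → ℕ} {N : Matrix ι ι R}
    (hN : N ∈ strictBlockTriangularSubmodule b) : IsNilpotent N := by
  refine ⟨Finset.univ.sup b + 1, ext fun i j => ?_⟩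
  have := Finset.le_sup (f := b) (Finset.mem_univ j)
  exact pow_apply_eq_zero_of_mem_strictBlockTriangularSubmodule hN _ i j (by omega)

end Matrix

theorem IsDiagonalizable.smul {n : ℕ} {A : Matrix (Fin n) (Fin n) ℂ} (hA : IsDiagonalizable A)
    (c : ℂ) : IsDiagonalizable (c • A) := by
  obtain ⟨P, hP, hD⟩ := hA
  exact ⟨P, hP, by simpa only [Matrix.mul_smul, Matrix.smul_mul] using hD.smul c⟩

theorem isDiagonalizable_of_mul_eq_mul_diagonal {n : ℕ} {A P : Matrix (Fin n) (Fin n) ℂ}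
    (d : Fin n → ℂ) (hP : P.det ≠ 0) (h : A * P = P * diagonal d) : IsDiagonalizable A := by
  have hP : IsUnit P.det := hP.isUnit
  refine ⟨P, (isUnit_iff_isUnit_det P).mpr hP, ?_⟩
  rw [Matrix.mul_assoc, h, nonsing_inv_mul_cancel_left P (diagonal d) hP]
  exact isDiag_diagonal d

theorem isDiagonalizable_X4 (α β : ℂ) : IsDiagonalizable (X4 α β) := by
  -- columns: the image vector of `X4` (eigenvalue `tr X4 = 2`) and a basis of its kernel
  refine isDiagonalizable_of_mul_eq_mul_diagonal ![2, 0, 0, 0]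
    (P := !![1, 1, 0, 1; 1, -1, 0, 0; (α + β) / 2, 0, 1, 0; 0, 0, 0, -2]) ?_ ?_
  · simp [det_succ_row_zero, Fin.sum_univ_succ, Fin.succAbove_of_castSucc_lt,
      Fin.succAbove_of_le_castSucc]
  · ext i j
    fin_cases i <;> fin_cases j <;> simp [X4, mul_apply, Fin.sum_univ_four] <;> ring

def semisimplePart (α β : ℂ) : Matrix (Fin 4) (Fin 4) ℂ →ₗ[ℂ] Matrix (Fin 4) (Fin 4) ℂ :=
  (2⁻¹ : ℂ) • (traceLinearMap (Fin 4) ℂ ℂ).smulRight (X4 α β)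

def nilpotentPart (α β : ℂ) : Matrix (Fin 4) (Fin 4) ℂ →ₗ[ℂ] Matrix (Fin 4) (Fin 4) ℂ :=
  LinearMap.id - semisimplePart α β

theorem semisimplePart_apply (α β : ℂ) (X : Matrix (Fin 4) (Fin 4) ℂ) :
    semisimplePart α β X = (X.trace / 2) • X4 α β := by
  simp [semisimplePart, div_eq_inv_mul, mul_smul]

theorem nilpotentPart_apply (α β : ℂ) (X : Matrix (Fin 4) (Fin 4) ℂ) :
    nilpotentPart α β X = X - semisimplePart α β X :=
  rfl

theorem nilpotentPart_mem {α β : ℂ} {p : Submodule ℂ (Matrix (Fin 4) (Fin 4) ℂ)}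
    (h1 : X1 α β - X4 α β ∈ p) (h2 : X2 α β - X4 α β ∈ p) (h3 : X3 ∈ p)
    {X : Matrix (Fin 4) (Fin 4) ℂ} (hX : X ∈ m α β) : nilpotentPart α β X ∈ p := by
  refine (Submodule.span_le (p := p.comap (nilpotentPart α β))).mpr ?_ hX
  simp only [Set.insert_subset_iff, Set.singleton_subset_iff, SetLike.mem_coe,
    Submodule.mem_comap, nilpotentPart_apply, semisimplePart_apply]
  obtain ⟨tr1, tr2, tr3, tr4⟩ : (X1 α β).trace = 2 ∧ (X2 α β).trace = 2 ∧ X3.trace = 0 ∧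
      (X4 α β).trace = 2 := by
    simp [trace, Fin.sum_univ_four, X1, X2, X3, X4]
    norm_num
  simp only [tr1, tr2, tr3, tr4]
  norm_num [h1, h2, h3]

theorem X4_mul_nilpotentPart {α β : ℂ} {X : Matrix (Fin 4) (Fin 4) ℂ} (hX : X ∈ m α β) :
    X4 α β * nilpotentPart α β X = 0 := by
  refine nilpotentPart_mem (p := LinearMap.ker (LinearMap.mulLeft ℂ (X4 α β))) ?_ ?_ ?_ hX <;>
  · ext i j
    fin_cases i <;> fin_cases j <;> simp [X1, X2, X3, X4, mul_apply, Fin.sum_univ_four] <;> ring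

theorem nilpotentPart_mul_X4 {α β : ℂ} {X : Matrix (Fin 4) (Fin 4) ℂ} (hX : X ∈ m α β) :
    nilpotentPart α β X * X4 α β = 0 := by
  refine nilpotentPart_mem (p := LinearMap.ker (LinearMap.mulRight ℂ (X4 α β))) ?_ ?_ ?_ hX <;>
  · ext i j
    fin_cases i <;> fin_cases j <;> simp [X1, X2, X3, X4, mul_apply, Fin.sum_univ_four] <;> ring

theorem nilpotentPart_mem_strictBlockTriangularSubmodule {α β : ℂ}
    {X : Matrix (Fin 4) (Fin 4) ℂ} (hX : X ∈ m α β) :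
    nilpotentPart α β X ∈ strictBlockTriangularSubmodule ![1, 1, 0, 2] := by
  refine nilpotentPart_mem ?_ ?_ ?_ hX <;>
  · intro i j hij
    fin_cases i <;> fin_cases j <;> simp_all [X1, X2, X3, X4]

theorem m_closed_under_jordan_general (α β : ℂ) :
    ∀ X ∈ m α β, ∃ S ∈ m α β, ∃ N ∈ m α β,
      X = S + N ∧ S * N = N * S ∧ IsNilpotent N ∧ IsDiagonalizable S := by
  intro X hX
  have hS : semisimplePart α β X ∈ m α β := by
    rw [semisimplePart_apply]
    exact Submodule.smul_mem _ _ (Submodule.subset_span (by simp))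
  refine ⟨_, hS, nilpotentPart α β X, Submodule.sub_mem _ hX hS,
    (add_sub_cancel _ _).symm, ?_, isNilpotent_of_mem_strictBlockTriangularSubmodule
      (nilpotentPart_mem_strictBlockTriangularSubmodule hX), ?_⟩
  · rw [semisimplePart_apply, Matrix.smul_mul, Matrix.mul_smul, X4_mul_nilpotentPart hX,
      nilpotentPart_mul_X4 hX]
  · rw [semisimplePart_apply]
    exact (isDiagonalizable_X4 α β).smul _

/-- m is closed under Chevalley–Jordan decomposition. -/
theorem m_closed_under_jordan (α β : ℂ) (hαβ : α + β ≠ 0) :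
    ∀ X ∈ m α β, ∃ S ∈ m α β, ∃ N ∈ m α β,
      X = S + N ∧ S * N = N * S ∧ IsNilpotent N ∧ IsDiagonalizable S :=
  m_closed_under_jordan_general α β
end
end
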